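/- For a random vector z = ẑ + e in R^d with ẑ fixed nonzero, E[e] = 0, E[‖e‖²] = tr(P), and θ the angle between z and ẑ (assume z ≠ 0 a.s.), one has the inequality ‖ẑ‖² / (‖ẑ‖² + tr(P)) ≤ E[(1 + cos 2θ)/2], where cos θ = ⟨z, ẑ⟩/(‖z‖‖ẑ‖). -/

import Mathlib

/-!
Cauchy–Schwarz applied to `f = ‖z‖ ‖ẑ‖` and `g = cos θ`, whose product is `⟨z, ẑ⟩`, gives
`‖ẑ‖⁴ = E[⟨z, ẑ⟩]² ≤ E[‖z‖² ‖ẑ‖²] E[cos² θ] = ‖ẑ‖² (‖ẑ‖² + tr P) E[cos² θ]`,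
the two moments being computed from `E[e] = 0` and `E[‖e‖²] = tr P`; finally
`cos² θ = (1 + cos 2θ) / 2`.
-/

open MeasureTheory Matrix

theorem sq_integral_mul_div_integral_sq_le {Ω : Type*} [MeasurableSpace Ω] {μ : Measure Ω}
    {f g : Ω → ℝ} (hfg : Integrable (fun ω => f ω * g ω) μ)
    (hf : Integrable (fun ω => f ω ^ 2) μ) (hg : Integrable (fun ω => g ω ^ 2) μ) :
    (∫ ω, f ω * g ω ∂μ) ^ 2 / ∫ ω, f ω ^ 2 ∂μ ≤ ∫ ω, g ω ^ 2 ∂μ := by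
  set a := ∫ ω, f ω * g ω ∂μ
  set b := ∫ ω, f ω ^ 2 ∂μ
  -- Integrate `(g - c f)² ≥ 0` with `c = a / b`; when `b = 0` both sides of `h_ab` are `0`.
  set c := a / b
  have h_pt : ∀ ω, 2 * c * (f ω * g ω) - c ^ 2 * f ω ^ 2 ≤ g ω ^ 2 := fun ω => by
    nlinarith [sq_nonneg (g ω - c * f ω)]
  have h_int : ∫ ω, 2 * c * (f ω * g ω) - c ^ 2 * f ω ^ 2 ∂μ = 2 * c * a - c ^ 2 * b := by
    rw [integral_sub (hfg.const_mul _) (hf.const_mul _), integral_const_mul, integral_const_mul]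
  have h_ab : 2 * c * a - c ^ 2 * b = a ^ 2 / b := by
    rcases eq_or_ne b 0 with hb | hb
    · simp [c, hb]
    · simp only [c]; field_simp; ring
  rw [← h_ab, ← h_int]
  exact integral_mono ((hfg.const_mul _).sub (hf.const_mul _)) hg h_pt

theorem mul_cos_arccos_div_of_abs_le {x y : ℝ} (h : |x| ≤ y) :
    y * Real.cos (Real.arccos (x / y)) = x := by
  rcases eq_or_lt_of_le ((abs_nonneg x).trans h) with hy | hy
  · subst hy
    simpa using (abs_nonpos_iff.mp h).symm
  · have hxy : |x / y| ≤ 1 := by rwa [abs_div, abs_of_pos hy, div_le_one hy]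
    rw [Real.cos_arccos (abs_le.mp hxy).1 (abs_le.mp hxy).2, mul_div_cancel₀ _ hy.ne']

theorem dotProduct_self_nonneg {R ι : Type*} [Ring R] [LinearOrder R] [IsOrderedRing R]
    [Fintype ι] (v : ι → R) : 0 ≤ v ⬝ᵥ v :=
  Fintype.sum_nonneg fun i => mul_self_nonneg (v i)

theorem abs_dotProduct_le_sqrt_mul_sqrt {ι : Type*} [Fintype ι] (v w : ι → ℝ) :
    |v ⬝ᵥ w| ≤ √(v ⬝ᵥ v) * √(w ⬝ᵥ w) := by
  rw [← Real.sqrt_mul (dotProduct_self_nonneg v)]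
  apply Real.abs_le_sqrt
  simpa [dotProduct, sq, mul_pow] using Finset.sum_mul_sq_le_sq_mul_sq Finset.univ v w

section RandomVector

variable {Ω ι : Type*} [MeasurableSpace Ω] {μ : Measure Ω} [Fintype ι] {e : Ω → ι → ℝ}

theorem integrable_dotProduct_const (he : ∀ i, Integrable (fun ω => e ω i) μ) (w : ι → ℝ) :
    Integrable (fun ω => e ω ⬝ᵥ w) μ :=
  integrable_finsetSum _ fun i _ => (he i).mul_const (w i)

theorem integral_dotProduct_const (he : ∀ i, Integrable (fun ω => e ω i) μ) (w : ι → ℝ) :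
    ∫ ω, e ω ⬝ᵥ w ∂μ = (fun i => ∫ ω, e ω i ∂μ) ⬝ᵥ w := by
  simp only [dotProduct]
  rw [integral_finsetSum _ fun i _ => (he i).mul_const (w i)]
  simp only [integral_mul_const]

theorem integrable_add_dotProduct_const [IsFiniteMeasure μ]
    (he : ∀ i, Integrable (fun ω => e ω i) μ) (a w : ι → ℝ) : Integrable (fun ω => (a + e ω) ⬝ᵥ w) μ := by
  simp only [add_dotProduct]
  exact (integrable_const _).add (integrable_dotProduct_const he w)

theorem integral_add_dotProduct_const [IsProbabilityMeasure μ]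
    (he : ∀ i, Integrable (fun ω => e ω i) μ) (h_mean : ∀ i, ∫ ω, e ω i ∂μ = 0) (a w : ι → ℝ) :
    ∫ ω, (a + e ω) ⬝ᵥ w ∂μ = a ⬝ᵥ w := by
  simp only [add_dotProduct]
  rw [integral_add (integrable_const _) (integrable_dotProduct_const he w),
    integral_dotProduct_const he, funext h_mean]
  simp

theorem add_dotProduct_add_self (a v : ι → ℝ) :
    (a + v) ⬝ᵥ (a + v) = (a + v) ⬝ᵥ a + (v ⬝ᵥ a + v ⬝ᵥ v) := by
  rw [dotProduct_add, add_dotProduct a v v, dotProduct_comm a v]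

theorem integrable_add_dotProduct_self [IsFiniteMeasure μ]
    (he : ∀ i, Integrable (fun ω => e ω i) μ)
    (he_sq : Integrable (fun ω => e ω ⬝ᵥ e ω) μ) (a : ι → ℝ) :
    Integrable (fun ω => (a + e ω) ⬝ᵥ (a + e ω)) μ := by
  simp only [add_dotProduct_add_self]
  exact (integrable_add_dotProduct_const he a a).add ((integrable_dotProduct_const he a).add he_sq)

theorem integral_add_dotProduct_self [IsProbabilityMeasure μ]
    (he : ∀ i, Integrable (fun ω => e ω i) μ) (h_mean : ∀ i, ∫ ω, e ω i ∂μ = 0)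
    (he_sq : Integrable (fun ω => e ω ⬝ᵥ e ω) μ) (a : ι → ℝ) :
    ∫ ω, (a + e ω) ⬝ᵥ (a + e ω) ∂μ = a ⬝ᵥ a + ∫ ω, e ω ⬝ᵥ e ω ∂μ := by
  have h_rest : Integrable (fun ω => e ω ⬝ᵥ a + e ω ⬝ᵥ e ω) μ :=
    (integrable_dotProduct_const he a).add he_sq
  simp only [add_dotProduct_add_self]
  rw [integral_add (integrable_add_dotProduct_const he a a) h_rest,
    integral_add (integrable_dotProduct_const he a) he_sq, integral_add_dotProduct_const he h_mean,
    integral_dotProduct_const he, funext h_mean]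
  simp

end RandomVector

theorem angle_cos_lower_bound_general
    {Ω : Type*} [MeasurableSpace Ω] (μ : Measure Ω) [IsProbabilityMeasure μ]
    {d : ℕ} (zhat : Fin d → ℝ)
    (e : Ω → Fin d → ℝ) (he : Measurable e)
    (z : Ω → Fin d → ℝ) (hz : ∀ ω, z ω = zhat + e ω)
    (P : Matrix (Fin d) (Fin d) ℝ)
    (h_mean : ∀ i, Integrable (fun ω => e ω i) μ ∧ ∫ ω, e ω i ∂μ = 0)
    (h_int_sq : Integrable (fun ω => e ω ⬝ᵥ e ω) μ)
    (h_cov : ∫ ω, e ω ⬝ᵥ e ω ∂μ = P.trace)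
    (θ : Ω → ℝ)
    (hθ : ∀ ω, θ ω = Real.arccos
      ((z ω ⬝ᵥ zhat) / (Real.sqrt (z ω ⬝ᵥ z ω) * Real.sqrt (zhat ⬝ᵥ zhat)))) :
    (zhat ⬝ᵥ zhat) / (zhat ⬝ᵥ zhat + P.trace)
      ≤ ∫ ω, (1 + Real.cos (2 * θ ω)) / 2 ∂μ := by
  set A := zhat ⬝ᵥ zhat
  set f := fun ω => √(z ω ⬝ᵥ z ω) * √A
  have hfg : ∀ ω, f ω * Real.cos (θ ω) = (zhat + e ω) ⬝ᵥ zhat := fun ω => by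
    rw [hθ ω, mul_cos_arccos_div_of_abs_le (abs_dotProduct_le_sqrt_mul_sqrt _ _), hz]
  have hf : ∀ ω, f ω ^ 2 = (zhat + e ω) ⬝ᵥ (zhat + e ω) * A := fun ω => by
    rw [mul_pow, Real.sq_sqrt (dotProduct_self_nonneg _), Real.sq_sqrt (dotProduct_self_nonneg _),
      hz]
  have he_int (i : Fin d) := (h_mean i).1
  have he_mean (i : Fin d) := (h_mean i).2
  have hcos_int : Integrable (fun ω => Real.cos (θ ω) ^ 2) μ := by
    have hθ_meas : Measurable θ := by
      rw [funext hθ, funext hz]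
      simp only [dotProduct]
      fun_prop
    refine .of_bound (by fun_prop) 1 (.of_forall fun ω => ?_)
    simpa [abs_le] using Real.cos_sq_le_one (θ ω)
  have h_cs := sq_integral_mul_div_integral_sq_le (f := f) (g := fun ω => Real.cos (θ ω))
    (by simpa only [hfg] using integrable_add_dotProduct_const he_int zhat zhat)
    (by simpa only [hf] using (integrable_add_dotProduct_self he_int h_int_sq zhat).mul_const A)
    hcos_int
  simp only [hfg, hf, integral_mul_const, integral_add_dotProduct_const he_int he_mean,
    integral_add_dotProduct_self he_int he_mean h_int_sq, h_cov] at h_cs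
  calc A / (A + P.trace) = A ^ 2 / ((A + P.trace) * A) := by
        rcases eq_or_ne A 0 with hA | hA
        · simp [hA]
        · field_simp
    _ ≤ ∫ ω, Real.cos (θ ω) ^ 2 ∂μ := h_cs
    _ = ∫ ω, (1 + Real.cos (2 * θ ω)) / 2 ∂μ := by simp only [Real.cos_sq]; ring_nf

/-- For `z = ẑ + e` with `ẑ` fixed nonzero, `E[e] = 0`, `E[‖e‖²] = tr P`, and `θ`
the angle between `z` and `ẑ`, one has
`‖ẑ‖² / (‖ẑ‖² + tr P) ≤ E[(1 + cos 2θ)/2]`. -/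
theorem angle_cos_lower_bound
    {Ω : Type*} [MeasurableSpace Ω] (μ : Measure Ω) [IsProbabilityMeasure μ]
    {d : ℕ} (zhat : Fin d → ℝ) (hzhat : zhat ≠ 0)
    (e : Ω → Fin d → ℝ) (he : Measurable e)
    (z : Ω → Fin d → ℝ) (hz : ∀ ω, z ω = zhat + e ω)
    (hz_ne : ∀ᵐ ω ∂μ, z ω ≠ 0)
    (P : Matrix (Fin d) (Fin d) ℝ)
    (h_mean : ∀ i, Integrable (fun ω => e ω i) μ ∧ ∫ ω, e ω i ∂μ = 0)
    (h_int_sq : Integrable (fun ω => e ω ⬝ᵥ e ω) μ)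
    (h_cov : ∫ ω, e ω ⬝ᵥ e ω ∂μ = P.trace)
    (θ : Ω → ℝ)
    (hθ : ∀ ω, θ ω = Real.arccos
      ((z ω ⬝ᵥ zhat) / (Real.sqrt (z ω ⬝ᵥ z ω) * Real.sqrt (zhat ⬝ᵥ zhat)))) :
    (zhat ⬝ᵥ zhat) / (zhat ⬝ᵥ zhat + P.trace)
      ≤ ∫ ω, (1 + Real.cos (2 * θ ω)) / 2 ∂μ :=
  angle_cos_lower_bound_general μ zhat e he z hz P h_mean h_int_sq h_cov θ hθ
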